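/- arXiv:2006.16089 — 3 statements merged into one kernel-verified Lean document; each statement's English description precedes it below -/
import Mathlib

section
/- For any prime p, positive integer a, and positive integer n with p not dividing n, the sum over k from 1 to p^a - 1 of B_k / (-n)^k is congruent to a·(-1)^(n-1)·D_{n-1} modulo p, where the sum is interpreted in Z_p (noting (-n)^k is invertible mod p). -/
/-- Stirling numbers of the second kind. -/
def stirling2 : ℕ → ℕ → ℕ
  | 0, 0 => 1
  | 0, _ + 1 => 0
  | _ + 1, 0 => 0
  | n + 1, k + 1 => (k + 1) * stirling2 n (k + 1) + stirling2 n k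

/-- The Bell numbers: the number of partitions of an `n`-element set. -/
def bell (n : ℕ) : ℕ := ∑ k ∈ Finset.range (n + 1), stirling2 n k

/-!
Work in the Artin–Schreier algebra `A = 𝔽_p[θ]/(θ^p - θ - 1)`. Since
`∏_{i<p} (θ - i) = θ^p - θ = 1`, the falling factorials `(θ)_j` are periodic in `j` with period
`p`, and `(θ)_0, …, (θ)_{p-1}` form a basis of `A`. The linear form `L` taking the value `1` on each
of them satisfies `L(θ^k) = B_k`, because `θ^k = ∑_j S(k, j) (θ)_j`.

With `x = -1/n` and `s = xθ`, Frobenius gives `s^(p^a) = x(θ + a)`, so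
`∑_{k=1}^{p^a-1} s^k = (s^(p^a) - s)/(s - 1) = a/(θ + n)`, and applying `L` turns the left side into
`∑ B_k x^k`. Expanding `1/(θ + n)` in the falling-factorial basis gives
`L(1/(θ + n)) = ∑_{m<p} (1 - n)(2 - n)⋯(m - n)`, which satisfies the recurrence of
`(-1)^(n-1) D_(n-1)` in `n`.
-/

open Finset Polynomial

theorem stirling2_eq_stirlingSecond : ∀ n k : ℕ, stirling2 n k = Nat.stirlingSecond n k
  | 0, 0 | 0, _ + 1 | _ + 1, 0 => rfl
  | n + 1, k + 1 => by
    rw [stirling2, Nat.stirlingSecond_succ_succ, stirling2_eq_stirlingSecond n,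
      stirling2_eq_stirlingSecond n]

theorem pow_eq_sum_stirling2_mul_descPochhammer_eval {R : Type*} [CommRing R] (t : R) (k : ℕ) :
    t ^ k = ∑ j ∈ range (k + 1), (stirling2 k j : R) * (descPochhammer R j).eval t := by
  induction k with
  | zero => simp [stirling2]
  | succ k ih =>
    set d : ℕ → R := fun j => (descPochhammer R j).eval t
    set g : ℕ → R := fun j => j * stirling2 k j * d j
    have hshift : ∑ j ∈ range (k + 1), g (j + 1) = ∑ j ∈ range (k + 1), g j := by
      have h := sum_range_succ' g (k + 1)
      rw [sum_range_succ] at h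
      simpa [g, stirling2_eq_stirlingSecond, Nat.stirlingSecond_eq_zero_of_lt] using h.symm
    calc t ^ (k + 1) = ∑ j ∈ range (k + 1), (stirling2 k j * d (j + 1) + g j) := by
          rw [pow_succ', ih, mul_sum]
          refine sum_congr rfl fun j _ => ?_
          simp only [d, g, descPochhammer_succ_eval]
          ring
      _ = ∑ j ∈ range (k + 1), (stirling2 k j * d (j + 1) + g (j + 1)) := by
          rw [sum_add_distrib, sum_add_distrib, hshift]
      _ = ∑ j ∈ range (k + 2), (stirling2 (k + 1) j : R) * d j := by
          rw [sum_range_succ' (fun j => (stirling2 (k + 1) j : R) * d j) (k + 1)]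
          simp only [stirling2, g]
          push_cast
          simp only [zero_mul, add_zero]
          refine sum_congr rfl fun j _ => ?_
          ring

section Pochhammer

variable {p : ℕ} [Fact p.Prime]

theorem descPochhammer_zmod_prime : descPochhammer (ZMod p) p = X ^ p - X := by
  have hprod : ∀ n, descPochhammer (ZMod p) n = ∏ i ∈ range n, (X - C (i : ZMod p)) := by
    intro n
    induction n with
    | zero => simp
    | succ n ih => rw [descPochhammer_succ_right, ih, prod_range_succ, map_natCast]
  have hsplit := FiniteField.splits_X_pow_card_sub_X p (K := ZMod p)
  have hroots := FiniteField.roots_X_pow_card_sub_X (ZMod p)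
  rw [Algebra.algebraMap_self, map_id, ZMod.card] at hsplit
  rw [ZMod.card] at hroots
  rw [hprod, hsplit.eq_prod_roots_of_monic ((monic_X_pow p).sub_of_left ?_), hroots]
  · refine prod_nbij' (fun i => (i : ZMod p)) (fun a => a.val) (by simp) (by simp [ZMod.val_lt])
      (fun i hi => ZMod.val_cast_of_lt (mem_range.mp hi)) (by simp) (by simp)
  · rw [degree_X_pow, degree_X]
    exact_mod_cast (Fact.out : p.Prime).one_lt

section CharP

variable {A : Type*} [CommRing A] [CharP A p]

theorem descPochhammer_eval_prime (t : A) : (descPochhammer A p).eval t = t ^ p - t := by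
  simpa [descPochhammer_map] using
    congr_arg (fun f => (f.map (ZMod.castHom (dvd_refl p) A)).eval t) descPochhammer_zmod_prime

theorem descPochhammer_eval_prime_add (t : A) (j : ℕ) :
    (descPochhammer A (p + j)).eval t = (t ^ p - t) * (descPochhammer A j).eval t := by
  rw [← descPochhammer_mul, eval_mul, eval_comp, descPochhammer_eval_prime, eval_sub, eval_X,
    eval_natCast, CharP.cast_eq_zero, sub_zero]

theorem pow_prime_pow_eq_add_natCast {θ : A} (hθ : θ ^ p = θ + 1) (a : ℕ) :
    θ ^ p ^ a = θ + a := by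
  induction a with
  | zero => simp
  | succ a ih =>
    rw [pow_succ, pow_mul, ih, add_pow_char, hθ, ← frobenius_def, map_natCast]
    push_cast
    ring

end CharP

theorem ascPochhammer_zmod_eval_prime (x : ZMod p) : (ascPochhammer (ZMod p) p).eval x = 0 := by
  rw [← neg_neg x, ascPochhammer_eval_neg_eq_descPochhammer, descPochhammer_eval_prime,
    ZMod.pow_card (-x), sub_self, mul_zero]

theorem sum_ascPochhammer_eval_sub_one (x : ZMod p) :
    ∑ m ∈ range p, (ascPochhammer (ZMod p) m).eval (x - 1) =
      1 + (x - 1) * ∑ m ∈ range p, (ascPochhammer (ZMod p) m).eval x := by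
  rw [← add_zero (∑ m ∈ range p, _), ← ascPochhammer_zmod_eval_prime (x - 1), ← sum_range_succ,
    sum_range_succ', mul_sum, add_comm]
  simp [ascPochhammer_succ_left]

theorem sum_ascPochhammer_eval_neg_natCast (N : ℕ) :
    ∑ m ∈ range p, (ascPochhammer (ZMod p) m).eval (-N : ZMod p) =
      (-1) ^ N * numDerangements N := by
  induction N with
  | zero => simp [ascPochhammer_eval_zero, (Fact.out : p.Prime).pos]
  | succ N ih =>
    have hD := congr_arg (Int.cast : ℤ → ZMod p) (numDerangements_succ N)
    push_cast at hD
    rw [Nat.cast_succ, neg_add, ← sub_eq_add_neg, sum_ascPochhammer_eval_sub_one, ih, hD]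
    have hsq : ((-1 : ZMod p) ^ N) ^ 2 = 1 := by rw [← pow_mul, pow_mul', neg_one_sq, one_pow]
    linear_combination -hsq

end Pochhammer

noncomputable def pochhammerInv {p : ℕ} {A : Type*} [CommRing A] [Algebra (ZMod p) A] (θ : A)
    (y : ZMod p) : A :=
  ∑ m ∈ range p, (ascPochhammer (ZMod p) m).eval (1 - y) • (descPochhammer A (p - 1 - m)).eval θ

-- `(θ + y) (θ)_r = (θ)_(r+1) + (y + r) (θ)_r`, so the product telescopes to `(θ)_p = θ^p - θ`.
theorem add_algebraMap_mul_pochhammerInv {p : ℕ} [Fact p.Prime] {A : Type*} [CommRing A]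
    [Algebra (ZMod p) A] [CharP A p] {θ : A} (hθ : θ ^ p = θ + 1) (y : ZMod p) :
    (θ + algebraMap (ZMod p) A y) * pochhammerInv θ y = 1 := by
  set c : ℕ → ZMod p := fun m => (ascPochhammer (ZMod p) m).eval (1 - y)
  set d : ℕ → A := fun r => (descPochhammer A r).eval θ
  have hstep : ∀ m ∈ range p, (θ + algebraMap (ZMod p) A y) * (c m • d (p - 1 - m)) =
      c m • d (p - m) - c (m + 1) • d (p - (m + 1)) := by
    intro m hm
    obtain ⟨r, hr⟩ : ∃ r, p - m = r + 1 := ⟨p - 1 - m, by have := mem_range.mp hm; omega⟩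
    rw [show p - 1 - m = r by omega, show p - (m + 1) = r by omega, hr]
    have hr' : (r : ZMod p) = -(1 + m) := by
      have : ((r + 1 + m : ℕ) : ZMod p) = 0 := by
        rw [← hr, Nat.sub_add_cancel (mem_range.mp hm).le, ZMod.natCast_self]
      push_cast at this
      linear_combination this
    simp only [c, d, ascPochhammer_succ_eval, descPochhammer_succ_eval, Algebra.smul_def,
      ← map_natCast (algebraMap (ZMod p) A) r, hr', map_mul, map_add, map_sub, map_neg, map_one,
      map_natCast]
    ring
  rw [pochhammerInv, mul_sum, sum_congr rfl hstep, sum_range_sub' (fun m => c m • d (p - m))]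
  simp only [c, d, Nat.sub_self, Nat.sub_zero, ascPochhammer_zero, descPochhammer_zero, eval_one,
    ascPochhammer_zmod_eval_prime, descPochhammer_eval_prime, hθ, one_smul, zero_smul, sub_zero,
    add_sub_cancel_left]

theorem geom_sum_Ico_prime_pow_eq_natCast_mul_pochhammerInv {p : ℕ} [Fact p.Prime] {A : Type*}
    [CommRing A] [Algebra (ZMod p) A] [CharP A p] {θ : A} (hθ : θ ^ p = θ + 1) (a : ℕ)
    {y : ZMod p} (hy : y ≠ 0) :
    ∑ k ∈ Ico 1 (p ^ a), (algebraMap (ZMod p) A (-y)⁻¹ * θ) ^ k = a * pochhammerInv θ y := by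
  set ι := algebraMap (ZMod p) A
  set x := (-y)⁻¹ with hx
  set s := ι x * θ
  have hxy : x * y = -1 := by rw [hx, inv_neg, neg_mul, inv_mul_cancel₀ hy]
  have hxx : ι x⁻¹ * ι x = 1 := by
    rw [← map_mul, inv_mul_cancel₀ (inv_ne_zero (neg_ne_zero.mpr hy)), map_one]
  have hs : s - 1 = ι x * (θ + ι y) := by
    rw [mul_add, ← map_mul, hxy, map_neg, map_one, sub_eq_add_neg]
  have hpow : s ^ p ^ a = ι x * (θ + a) := by
    rw [mul_pow, ← map_pow, ZMod.pow_card_pow, pow_prime_pow_eq_add_natCast hθ]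
  calc ∑ k ∈ Ico 1 (p ^ a), s ^ k
      = (∑ k ∈ Ico 1 (p ^ a), s ^ k) * (s - 1) * (ι x⁻¹ * pochhammerInv θ y) := by
        rw [hs]
        linear_combination (-∑ k ∈ Ico 1 (p ^ a), s ^ k) *
          ((θ + ι y) * pochhammerInv θ y * hxx + add_algebraMap_mul_pochhammerInv hθ y)
    _ = (s ^ p ^ a - s) * (ι x⁻¹ * pochhammerInv θ y) := by
        rw [geom_sum_Ico_mul _ (Nat.one_le_pow _ _ (Fact.out : p.Prime).pos), pow_one]
    _ = a * pochhammerInv θ y := by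
        rw [hpow]
        linear_combination (a : A) * pochhammerInv θ y * hxx

section XPowSubXSubOne

variable {R : Type*} [Ring R] [Nontrivial R] {n : ℕ}

theorem natDegree_X_pow_sub_X_sub_one (hn : 1 < n) : (X ^ n - X - 1 : R[X]).natDegree = n := by
  rw [sub_sub, ← C_1, natDegree_sub_eq_left_of_natDegree_lt, natDegree_X_pow]
  rwa [natDegree_X_pow, natDegree_X_add_C]

theorem monic_X_pow_sub_X_sub_one (hn : 1 < n) : (X ^ n - X - 1 : R[X]).Monic := by
  rw [sub_sub, ← C_1]
  exact monic_X_pow_sub (by rw [degree_X_add_C]; exact_mod_cast hn)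

end XPowSubXSubOne

abbrev ArtinSchreier (p : ℕ) : Type := AdjoinRoot (X ^ p - X - 1 : (ZMod p)[X])

namespace ArtinSchreier

noncomputable abbrev root (p : ℕ) : ArtinSchreier p := AdjoinRoot.root _

theorem root_pow (p : ℕ) : root p ^ p = root p + 1 := by
  have h := AdjoinRoot.eval₂_root (X ^ p - X - 1 : (ZMod p)[X])
  rw [eval₂_sub, eval₂_sub, eval₂_X_pow, eval₂_X, eval₂_one] at h
  linear_combination h

variable (p : ℕ) [Fact p.Prime]

instance : Nontrivial (ArtinSchreier p) :=
  have hp := (Fact.out : p.Prime).one_lt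
  AdjoinRoot.nontrivial _ <| by
    rw [degree_eq_natDegree (monic_X_pow_sub_X_sub_one hp).ne_zero,
      natDegree_X_pow_sub_X_sub_one hp]
    exact_mod_cast (by omega : p ≠ 0)

instance : CharP (ArtinSchreier p) p :=
  charP_of_injective_algebraMap (algebraMap (ZMod p) _).injective p

theorem finrank_eq : Module.finrank (ZMod p) (ArtinSchreier p) = p := by
  rw [(AdjoinRoot.powerBasis' (monic_X_pow_sub_X_sub_one (Fact.out : p.Prime).one_lt)).finrank,
    AdjoinRoot.powerBasis'_dim, natDegree_X_pow_sub_X_sub_one (Fact.out : p.Prime).one_lt]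

theorem top_le_span_descPochhammer :
    ⊤ ≤ Submodule.span (ZMod p)
      (Set.range fun j : Fin p => (descPochhammer _ j).eval (root p)) := by
  have hp := (Fact.out : p.Prime).one_lt
  set pb := AdjoinRoot.powerBasis' (monic_X_pow_sub_X_sub_one (R := ZMod p) hp)
  rw [← pb.basis.span_eq, Submodule.span_le]
  rintro _ ⟨i, rfl⟩
  have hi : (i : ℕ) < p := i.is_lt.trans_eq (natDegree_X_pow_sub_X_sub_one hp)
  rw [pb.basis_eq_pow, AdjoinRoot.powerBasis'_gen]
  change root p ^ (i : ℕ) ∈ _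
  rw [pow_eq_sum_stirling2_mul_descPochhammer_eval (root p)]
  refine Submodule.sum_mem _ fun j hj => ?_
  have hj : j < p := by have := mem_range.mp hj; omega
  rw [← nsmul_eq_mul]
  exact Submodule.smul_of_tower_mem _ _ (Submodule.subset_span ⟨⟨j, hj⟩, rfl⟩)

noncomputable def descPochhammerBasis : Module.Basis (Fin p) (ZMod p) (ArtinSchreier p) :=
  basisOfTopLeSpanOfCardEqFinrank _ (top_le_span_descPochhammer p)
    (by rw [Fintype.card_fin, finrank_eq])

noncomputable def bellFunctional : ArtinSchreier p →ₗ[ZMod p] ZMod p :=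
  (descPochhammerBasis p).sumCoords

theorem bellFunctional_descPochhammer (j : ℕ) :
    bellFunctional p ((descPochhammer _ j).eval (root p)) = 1 := by
  induction j using Nat.strong_induction_on with
  | _ j ih =>
    obtain hj | hj := lt_or_ge j p
    · have : (descPochhammer _ j).eval (root p) = descPochhammerBasis p ⟨j, hj⟩ := by
        rw [descPochhammerBasis, coe_basisOfTopLeSpanOfCardEqFinrank]
      rw [this, bellFunctional, Module.Basis.sumCoords_self_apply]
    · obtain ⟨i, rfl⟩ := Nat.exists_eq_add_of_le hj
      rw [descPochhammer_eval_prime_add, root_pow, add_sub_cancel_left, one_mul]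
      exact ih i (by have := (Fact.out : p.Prime).pos; omega)

theorem bellFunctional_root_pow (k : ℕ) : bellFunctional p (root p ^ k) = bell k := by
  rw [pow_eq_sum_stirling2_mul_descPochhammer_eval (root p), map_sum, bell, Nat.cast_sum]
  refine sum_congr rfl fun j _ => ?_
  rw [← nsmul_eq_mul, map_nsmul, bellFunctional_descPochhammer, nsmul_eq_mul, mul_one]


theorem bellFunctional_pochhammerInv (y : ZMod p) :
    bellFunctional p (pochhammerInv (root p) y) =
      ∑ m ∈ range p, (ascPochhammer (ZMod p) m).eval (1 - y) := by
  rw [pochhammerInv, map_sum]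
  refine sum_congr rfl fun m _ => ?_
  rw [map_smul, bellFunctional_descPochhammer, smul_eq_mul, mul_one]

end ArtinSchreier

open ArtinSchreier in
theorem sum_Ico_bell_mul_inv_pow {p : ℕ} [Fact p.Prime] (a : ℕ) {y : ZMod p} (hy : y ≠ 0) :
    ∑ k ∈ Ico 1 (p ^ a), (bell k : ZMod p) * (-y)⁻¹ ^ k =
      a * ∑ m ∈ range p, (ascPochhammer (ZMod p) m).eval (1 - y) := by
  set ι := algebraMap (ZMod p) (ArtinSchreier p)
  calc ∑ k ∈ Ico 1 (p ^ a), (bell k : ZMod p) * (-y)⁻¹ ^ k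
      = bellFunctional p (∑ k ∈ Ico 1 (p ^ a), (ι (-y)⁻¹ * root p) ^ k) := by
        rw [map_sum]
        refine sum_congr rfl fun k _ => ?_
        rw [mul_pow, ← map_pow, ← Algebra.smul_def, map_smul, bellFunctional_root_pow, smul_eq_mul,
          mul_comm]
    _ = a * ∑ m ∈ range p, (ascPochhammer (ZMod p) m).eval (1 - y) := by
        rw [geom_sum_Ico_prime_pow_eq_natCast_mul_pochhammerInv (root_pow p) a hy,
          ← map_natCast ι, ← Algebra.smul_def, map_smul, bellFunctional_pochhammerInv, smul_eq_mul]

theorem map_ringInverse_of_isUnit {M α F : Type*} [MonoidWithZero M] [GroupWithZero α]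
    [FunLike F M α] [MonoidHomClass F M α] (f : F) {x : M} (hx : IsUnit x) :
    f (Ring.inverse x) = (f x)⁻¹ := by
  obtain ⟨u, rfl⟩ := hx
  rw [Ring.inverse_unit, map_units_inv]

namespace PadicInt

variable {p : ℕ} [Fact p.Prime]

theorem toZMod_eq_zero_iff_dvd (z : ℤ_[p]) : toZMod z = 0 ↔ (p : ℤ_[p]) ∣ z := by
  rw [← RingHom.mem_ker, ker_toZMod, maximalIdeal_eq_span_p, Ideal.mem_span_singleton]

theorem isUnit_iff_toZMod_ne_zero (z : ℤ_[p]) : IsUnit z ↔ toZMod z ≠ 0 := by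
  rw [← IsLocalRing.notMem_maximalIdeal, ← ker_toZMod, RingHom.mem_ker]

end PadicInt

theorem sun_zagier_extension_general (p : ℕ) [Fact p.Prime] (a n : ℕ)
    (hpn : ¬ p ∣ n) :
    (p : ℤ_[p]) ∣
      (∑ k ∈ Finset.Icc 1 (p ^ a - 1), (bell k : ℤ_[p]) * Ring.inverse ((-(n : ℤ_[p])) ^ k)) -
        (a : ℤ_[p]) * (-1) ^ (n - 1) * (numDerangements (n - 1) : ℤ_[p]) := by
  obtain ⟨N, rfl⟩ : ∃ N, n = N + 1 :=
    Nat.exists_eq_succ_of_ne_zero (by rintro rfl; exact hpn (dvd_zero p))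
  have hn : ((N + 1 : ℕ) : ZMod p) ≠ 0 := by rwa [Ne, ZMod.natCast_eq_zero_iff]
  have hunit : IsUnit (-((N + 1 : ℕ) : ℤ_[p])) := by
    rwa [PadicInt.isUnit_iff_toZMod_ne_zero, map_neg, map_natCast, neg_ne_zero]
  have hIcc : Icc 1 (p ^ a - 1) = Ico 1 (p ^ a) :=
    Icc_sub_one_right_eq_Ico_of_not_isMin (by simp [(Fact.out : p.Prime).ne_zero]) 1
  rw [← PadicInt.toZMod_eq_zero_iff_dvd, map_sub, map_sum, hIcc]
  simp only [map_mul, map_natCast, map_pow, map_neg, map_one,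
    map_ringInverse_of_isUnit _ (hunit.pow _), ← inv_pow]
  rw [sum_Ico_bell_mul_inv_pow a hn, Nat.add_sub_cancel,
    show 1 - ((N + 1 : ℕ) : ZMod p) = -N by push_cast; ring, sum_ascPochhammer_eval_neg_natCast]
  ring

/-- For any prime `p`, positive integers `a` and `n` with `p ∤ n`,
`∑_{k=1}^{p^a-1} B_k/(-n)^k ≡ a·(-1)^(n-1)·D_{n-1} (mod p)` in `ℤ_[p]`. -/
theorem sun_zagier_extension (p : ℕ) [Fact p.Prime] (a n : ℕ) (ha : 0 < a) (hn : 0 < n)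
    (hpn : ¬ p ∣ n) :
    (p : ℤ_[p]) ∣
      (∑ k ∈ Finset.Icc 1 (p ^ a - 1), (bell k : ℤ_[p]) * Ring.inverse ((-(n : ℤ_[p])) ^ k)) -
        (a : ℤ_[p]) * (-1) ^ (n - 1) * (numDerangements (n - 1) : ℤ_[p]) :=
  sun_zagier_extension_general p a n hpn
end

section
/- For any prime p and natural numbers j, k with j + k ≤ p^a - 1 (a a positive integer), the ratio of binomial coefficients C(p^a - 1 - k, j) / C(-1-k, j) is congruent to 1 modulo p; equivalently, C(p^a - 1 - k, j) ≡ (-1)^j · C(j + k, j) (mod p). -/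
/-!
Write `n = p ^ a - 1`. Since `p` divides `C(n + 1, m)` for `0 < m < p ^ a`, Pascal's rule gives
`C(n, m) ≡ -C(n, m - 1)`, hence `C(n, m) ≡ (-1) ^ m (mod p)` for all `m ≤ n`. The identity
`C(n, j + k) C(j + k, k) = C(n, k) C(n - k, j)` then reads
`(-1) ^ (j + k) C(j + k, j) ≡ (-1) ^ k C(n - k, j)`.
-/

theorem ZMod.natCast_choose_prime_pow_sub_one {p : ℕ} [Fact p.Prime] {a m : ℕ} (hm : m < p ^ a) :
    ((p ^ a - 1).choose m : ZMod p) = (-1) ^ m := by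
  induction m with
  | zero => simp
  | succ m ih =>
    have hdvd : ((p ^ a).choose (m + 1) : ZMod p) = 0 :=
      (ZMod.natCast_eq_zero_iff _ _).2 ((Fact.out : p.Prime).dvd_choose_pow m.succ_ne_zero hm.ne)
    rw [show p ^ a = p ^ a - 1 + 1 by omega, Nat.choose_succ_succ', Nat.cast_add,
      ih (by omega)] at hdvd
    linear_combination hdvd

theorem choose_pow_sub_one_congr_general (p : ℕ) [Fact p.Prime] (a : ℕ) (j k : ℕ)
    (hjk : j + k ≤ p ^ a - 1) :
    ((p ^ a - 1 - k).choose j : ℤ) ≡ (-1) ^ j * ((j + k).choose j : ℤ) [ZMOD p] := by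
  rw [← ZMod.intCast_eq_intCast_iff]
  push_cast
  have hpa : 0 < p ^ a := pow_pos (Fact.out : p.Prime).pos a
  have hchoose_mul := congrArg (Nat.cast : ℕ → ZMod p)
    (Nat.choose_mul (n := p ^ a - 1) (Nat.le_add_left k j))
  push_cast at hchoose_mul
  rw [Nat.add_sub_cancel, ← Nat.choose_symm_add,
    ZMod.natCast_choose_prime_pow_sub_one (by omega),
    ZMod.natCast_choose_prime_pow_sub_one (by omega), pow_add] at hchoose_mul
  apply mul_left_cancel₀ (pow_ne_zero k (neg_ne_zero.2 one_ne_zero) : ((-1 : ZMod p) ^ k) ≠ 0)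
  rw [← hchoose_mul]
  ring

/-- For a prime `p`, `a ≥ 1`, and `j + k ≤ p^a - 1`, one has
`C(p^a-1-k, j) ≡ (-1)^j · C(j+k, j) (mod p)`, i.e. `C(p^a-1-k,j)/C(-1-k,j) ≡ 1 (mod p)`. -/
theorem choose_pow_sub_one_congr (p : ℕ) [Fact p.Prime] (a : ℕ) (ha : 0 < a) (j k : ℕ)
    (hjk : j + k ≤ p ^ a - 1) :
    ((p ^ a - 1 - k).choose j : ℤ) ≡ (-1) ^ j * ((j + k).choose j : ℤ) [ZMOD p] :=
  choose_pow_sub_one_congr_general p a j k hjk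
end

section
/- For any prime p, positive integer a, and integer n with p ∤ n and p ∤ (n+1), one has, for 0 ≤ l ≤ p^a - 1, ∑_{r=1}^{p^a-1-l} C(-l-1, r-1)/n^{r-1} ≡ (n/(n+1))^l - n^l (mod p) in Z_p. -/
open Finset

private lemma key_binom (p : ℕ) [Fact p.Prime] (a : ℕ) :
    ∀ k, k < p ^ a → ∀ m l : ℕ, m + l + 1 = p ^ a → k ≤ m + 1 →
      ((m.choose k : ZMod p)) = (-1) ^ k * ((l + k).choose k : ZMod p) := by
  intro k
  induction k with
  | zero => intro _ m l _ _; simp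
  | succ k ih =>
    intro hk
    suffices h : ∀ t m l : ℕ, m + l + 1 = p ^ a → m + 1 = (k + 1) + t →
        ((m.choose (k+1) : ZMod p)) = (-1) ^ (k+1) * ((l + (k+1)).choose (k+1) : ZMod p) by
      intro m l hml hkm
      exact h (m + 1 - (k+1)) m l hml (by omega)
    intro t
    induction t with
    | zero =>
      intro m l hml hm
      have hmk : m = k := by omega
      have h2 : ((p ^ a).choose (k+1) : ZMod p) = 0 := by
        rw [ZMod.natCast_eq_zero_iff]
        exact (Fact.out : p.Prime).dvd_choose_pow (by omega) (by omega)
      have h3 : l + (k + 1) = p ^ a := by omega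
      rw [hmk, Nat.choose_succ_self, h3, h2]
      simp
    | succ t iht =>
      intro m l hml hm
      obtain ⟨m', rfl⟩ : ∃ m', m = m' + 1 := ⟨m - 1, by omega⟩
      rw [Nat.choose_succ_succ']
      have h1 := ih (by omega) m' (l + 1) (by omega) (by omega)
      have h2 := iht m' (l + 1) (by omega) (by omega)
      push_cast [h1, h2]
      have h3 : (l + 1) + (k + 1) = (l + (k+1)) + 1 := by omega
      rw [h3, Nat.choose_succ_succ' (l + (k+1)) k]
      have h5 : l + (k + 1) = l + k + 1 := by omega
      push_cast [h5]
      ring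

private lemma fermat_pow (p : ℕ) [Fact p.Prime] (a : ℕ) (m l : ℕ) (hml : m + l + 1 = p ^ a)
    (u : ZMod p) (hu : u ≠ 0) : u ^ m = (u⁻¹) ^ l := by
  have h1 : u ^ (p ^ a) = u := ZMod.pow_card_pow u
  have h2 : u ^ m * u ^ l * u = 1 * u := by
    rw [one_mul, ← pow_add, ← pow_succ]
    rw [show m + l + 1 = p ^ a from hml, h1]
  have h3 : u ^ m * u ^ l = 1 := mul_right_cancel₀ hu h2
  rw [inv_pow]
  exact eq_inv_of_mul_eq_one_left h3

/-- For a prime `p`, `a ≥ 1`, an integer `n` with `p ∤ n` and `p ∤ n+1`, and `0 ≤ l ≤ p^a-1`,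
`∑_{r=1}^{p^a-1-l} C(-l-1, r-1)/n^{r-1} ≡ (n/(n+1))^l - n^l (mod p)` in `ℤ_[p]`,
where `C(-l-1, r-1) = (-1)^(r-1)·C(l+r-1, r-1)`. -/
theorem geometric_sum_step (p : ℕ) [Fact p.Prime] (a : ℕ) (ha : 0 < a) (n : ℤ)
    (hpn : ¬ (p : ℤ) ∣ n) (hpn1 : ¬ (p : ℤ) ∣ (n + 1)) (l : ℕ) (hl : l ≤ p ^ a - 1) :
    (p : ℤ_[p]) ∣
      (∑ r ∈ Finset.Icc 1 (p ^ a - 1 - l),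
          ((-1 : ℤ_[p]) ^ (r - 1) * ((l + r - 1).choose (r - 1) : ℤ_[p])) *
            Ring.inverse ((n : ℤ_[p]) ^ (r - 1))) -
        (((n : ℤ_[p]) * Ring.inverse ((n : ℤ_[p]) + 1)) ^ l - (n : ℤ_[p]) ^ l) := by
  have hp : p.Prime := Fact.out
  have hpa : 1 ≤ p ^ a := Nat.one_le_pow _ _ hp.pos
  set m := p ^ a - 1 - l with hm
  have hml : m + l + 1 = p ^ a := by omega
  -- reduce divisibility to the residue field
  have hdvd : ∀ z : ℤ_[p], PadicInt.toZMod z = 0 → (p : ℤ_[p]) ∣ z := by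
    intro z hz
    have hz' : z ∈ RingHom.ker (PadicInt.toZMod : ℤ_[p] →+* ZMod p) := hz
    rwa [PadicInt.ker_toZMod, PadicInt.maximalIdeal_eq_span_p,
      Ideal.mem_span_singleton] at hz'
  apply hdvd
  set f : ℤ_[p] →+* ZMod p := PadicInt.toZMod with hf
  -- units
  have hunit : ∀ z : ℤ, ¬ (p : ℤ) ∣ z → IsUnit ((z : ℤ_[p])) := by
    intro z hz
    refine PadicInt.isUnit_iff.mpr (le_antisymm (PadicInt.norm_le_one _) ?_)
    by_contra h
    exact hz ((PadicInt.norm_int_lt_one_iff_dvd z).mp (lt_of_not_ge h))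
  have hun : IsUnit ((n : ℤ_[p])) := hunit n hpn
  have hcast1 : ((n : ℤ_[p]) + 1) = (((n + 1 : ℤ)) : ℤ_[p]) := by push_cast; ring
  have hun1 : IsUnit ((n : ℤ_[p]) + 1) := hcast1 ▸ hunit (n + 1) hpn1
  have hinv : ∀ x : ℤ_[p], IsUnit x → f (Ring.inverse x) = (f x)⁻¹ := by
    intro x hx
    refine eq_inv_of_mul_eq_one_left ?_
    rw [← map_mul, Ring.inverse_mul_cancel _ hx, map_one]
  set nn : ZMod p := (n : ZMod p) with hnn
  have hfn : f ((n : ℤ_[p])) = nn := map_intCast f n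
  have hnn0 : nn ≠ 0 := fun h => hpn ((ZMod.intCast_zmod_eq_zero_iff_dvd n p).mp h)
  have hnn10 : nn + 1 ≠ 0 := by
    intro h
    apply hpn1
    rw [← ZMod.intCast_zmod_eq_zero_iff_dvd]
    push_cast
    exact h
  have hfi1 : f (Ring.inverse ((n : ℤ_[p]) + 1)) = (nn + 1)⁻¹ := by
    rw [hinv _ hun1, map_add, hfn, map_one]
  have hfir : ∀ k : ℕ, f (Ring.inverse ((n : ℤ_[p]) ^ k)) = (nn ^ k)⁻¹ := by
    intro k
    rw [hinv _ (hun.pow k), map_pow, hfn]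
  rw [map_sub, map_sub, map_pow, map_pow, map_mul, hfn, hfi1, map_sum]
  simp only [map_mul, map_pow, map_neg, map_one, map_natCast, hfir]
  rw [sub_eq_zero]
  -- rewrite the binomial coefficients
  have hterm : ∀ r ∈ Finset.Icc 1 m,
      ((-1 : ZMod p) ^ (r - 1) * ((l + r - 1).choose (r - 1) : ZMod p)) * (nn ^ (r - 1))⁻¹
        = ((m.choose (r - 1) : ZMod p)) * (nn⁻¹) ^ (r - 1) := by
    intro r hr
    simp only [Finset.mem_Icc] at hr
    have hkey := key_binom p a (r - 1) (by omega) m l hml (by omega)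
    have hlr : l + r - 1 = l + (r - 1) := by omega
    rw [hlr, ← hkey, inv_pow]
  rw [Finset.sum_congr rfl hterm]
  -- reindex and sum the binomial expansion
  rw [← Finset.Ico_add_one_right_eq_Icc, Finset.sum_Ico_eq_sum_range]
  simp only [Nat.add_sub_cancel, Nat.add_sub_cancel_left, Nat.succ_sub_one]
  have hy : (nn⁻¹ + 1) ^ m = ∑ i ∈ Finset.range (m + 1),
      (nn⁻¹) ^ i * 1 ^ (m - i) * (m.choose i : ZMod p) := add_pow nn⁻¹ 1 m
  rw [Finset.sum_range_succ] at hy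
  simp only [one_pow, mul_one, Nat.choose_self, Nat.cast_one] at hy
  have hsum : ∑ i ∈ Finset.range m, ((m.choose i : ZMod p)) * (nn⁻¹) ^ i
      = (nn⁻¹ + 1) ^ m - (nn⁻¹) ^ m := by
    rw [hy]
    rw [Finset.sum_congr rfl (fun i _ => mul_comm ((m.choose i : ZMod p)) ((nn⁻¹) ^ i))]
    ring
  rw [hsum]
  -- Fermat's little theorem finishes
  have hw : nn⁻¹ + 1 = (nn + 1) * nn⁻¹ := by field_simp; ring
  have hw0 : (nn + 1) * nn⁻¹ ≠ 0 := mul_ne_zero hnn10 (inv_ne_zero hnn0)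
  have h1 : ((nn + 1) * nn⁻¹) ^ m = (((nn + 1) * nn⁻¹)⁻¹) ^ l :=
    fermat_pow p a m l hml _ hw0
  have h2 : (nn⁻¹) ^ m = ((nn⁻¹)⁻¹) ^ l := fermat_pow p a m l hml _ (inv_ne_zero hnn0)
  rw [hw, h1, h2, inv_inv, mul_inv, inv_inv, mul_comm (nn + 1)⁻¹ nn]
end
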